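/- Let γ ∈ (0,1), d ≥ 1, and let ψ_S = ψ ∘ S : H(A_γ^d) → T(A_γ-multi-index) be the composition of the symmetrization map S (applying the letter map (i_1⋯i_n) ↦ corresponding multi-index at each decoration) with the contracting arborification ψ into the quasi-shuffle algebra over the multi-index alphabet A = {α ∈ N^d \ {0} : |α| ≤ N_γ} with bracket [α,β] = α+β if |α+β| ≤ N_γ, else 0. Then for all 1 ≤ n ≤ N_γ and i_1,…,i_n ∈ {1,…,d}, ψ_S(⟪i_1⋯i_n⟫) = [e_{i_1}⋯e_{i_n}], the letter e_{i_1}+⋯+e_{i_n}. -/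

import Mathlib

/-!
`ψ_S` sends the forest `•_{i₁}⋯•_{iₙ}` to the quasi-shuffle product `P(i₁⋯iₙ)` of the one-letter
words `e_{i₁}, …, e_{iₙ}`. Sorting the words of this product by the set `S` of factors contracted
into their last letter gives `P(l) = ∑_{S ≠ ∅} P(l_{Sᶜ}) e_S`, where `e_S = ∑_{k ∈ S} e_{i_k}`:
multiplying by one more letter `e_i` either appends `e_i`, or leaves the last letter `e_S` in
place, or merges `e_i` into it, and since `n ≤ N_γ` the bracket `[e_i, e_S] = e_i + e_S` never
vanishes. On the other side, `ψ_S(B⁺_{l_S}(•_{l_{Sᶜ}})) = P(l_{Sᶜ}) e_S`, so the bracket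
polynomial, which subtracts exactly the terms with `∅ ≠ S ≠ {1, …, n}`, is sent to the remaining
term `e_l`.
-/


open Finsupp
open scoped Classical TensorProduct

noncomputable section

abbrev TA (A : Type) := List A →₀ ℝ

def wordE {A : Type} (w : List A) : TA A := Finsupp.single w 1

def appLetter {A : Type} (a : A) : TA A →ₗ[ℝ] TA A :=
  Finsupp.lmapDomain ℝ ℝ (fun u => u ++ [a])

def appGen {A : Type} (c : A →₀ ℝ) (y : TA A) : TA A :=
  c.sum fun x r => r • appLetter x y

def IsQuasiShuffle {A : Type} (br : A → A → (A →₀ ℝ))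
    (M : TA A →ₗ[ℝ] TA A →ₗ[ℝ] TA A) : Prop :=
  (∀ x : TA A, M (wordE []) x = x) ∧ (∀ x : TA A, M x (wordE []) = x) ∧
  ∀ (v w : List A) (a b : A),
    M (wordE (v ++ [a])) (wordE (w ++ [b])) =
      appLetter a (M (wordE v) (wordE (w ++ [b]))) +
      appLetter b (M (wordE (v ++ [a])) (wordE w)) +
      appGen (br a b) (M (wordE v) (wordE w))

inductive RT (A : Type) : Type
  | node : A → List (RT A) → RT A

abbrev HBCK (A : Type) := MonoidAlgebra ℝ (FreeMonoid (RT A))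

def Bplus {A : Type} (a : A) : HBCK A →ₗ[ℝ] HBCK A :=
  MonoidAlgebra.mapDomainLinearMap ℝ ℝ
    (fun f : FreeMonoid (RT A) => FreeMonoid.of (RT.node a (FreeMonoid.toList f)))

def fE {A : Type} (f : FreeMonoid (RT A)) : HBCK A := MonoidAlgebra.single f 1

/-- The multi-index alphabet `{α ∈ ℕ^d \ {0} : |α| ≤ N_γ}`. -/
abbrev AIdx (d Nγ : ℕ) := {α : Fin d → ℕ // 0 < (∑ j, α j) ∧ (∑ j, α j) ≤ Nγ}

/-- The bracket on the multi-index alphabet: `[α,β] = α + β` if `|α + β| ≤ N_γ`,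
and `0` otherwise. -/
def brIdx (d Nγ : ℕ) (α β : AIdx d Nγ) : AIdx d Nγ →₀ ℝ :=
  if h : (∑ j, (α.val j + β.val j)) ≤ Nγ then
    Finsupp.single ⟨fun j => α.val j + β.val j, by
      refine ⟨?_, h⟩
      rw [Finset.sum_add_distrib]
      exact lt_of_lt_of_le α.property.1 (Nat.le_add_right _ _)⟩ 1
  else 0

/-- The sub-tuple of `l` indexed by a set of positions, in increasing order. -/
def subL {d : ℕ} (l : List (Fin d)) (S : Finset (Fin l.length)) : List (Fin d) :=
  (S.sort (· ≤ ·)).map l.get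

/-- The forest of single nodes `•_{i₁}⋯•_{iₙ}` in the BCK algebra over the
alphabet of tuples. -/
def dotPC {d : ℕ} (l : List (Fin d)) : HBCK (List (Fin d)) :=
  (l.map fun i => fE (FreeMonoid.ofList [RT.node [i] []])).prod

/-- The bracket polynomial `⟪i₁⋯iₙ⟫` in the BCK algebra over tuples. -/
def bpOfC {d : ℕ} (l : List (Fin d)) : HBCK (List (Fin d)) :=
  dotPC l -
    ∑ S ∈ (Finset.univ : Finset (Finset (Fin l.length))).filter
        (fun S => S ≠ ∅ ∧ S ≠ Finset.univ),
      Bplus (subL l S) (dotPC (subL l Sᶜ))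

namespace Finset

theorem sum_univ_finset_fin_succ {M : Type*} [AddCommMonoid M] {n : ℕ}
    (f : Finset (Fin (n + 1)) → M) :
    ∑ S, f S = ∑ T : Finset (Fin n),
      (f (T.map (Fin.succEmb n)) + f (insert 0 (T.map (Fin.succEmb n)))) := by
  have hinj : Function.Injective (fun T : Finset (Fin n) => T.image Fin.succ) :=
    image_injective (Fin.succ_injective n)
  rw [← powerset_univ, Fin.univ_succ, cons_eq_insert, sum_powerset_insert (by simp),
    map_eq_image]
  simp only [Function.Embedding.coeFn_mk, powerset_image, sum_image hinj.injOn, powerset_univ,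
    ← sum_add_distrib, map_eq_image, Fin.coe_succEmb]

theorem compl_map_succEmb {n : ℕ} (T : Finset (Fin n)) :
    (T.map (Fin.succEmb n))ᶜ = insert 0 (Tᶜ.map (Fin.succEmb n)) := by
  ext k; cases k using Fin.cases <;> simp [Fin.succ_ne_zero]

theorem compl_insert_zero_map_succEmb {n : ℕ} (T : Finset (Fin n)) :
    (insert 0 (T.map (Fin.succEmb n)))ᶜ = Tᶜ.map (Fin.succEmb n) := by
  ext k; cases k using Fin.cases <;> simp [Fin.succ_ne_zero]

end Finset

open Finset

theorem subL_cons_map_succEmb {d : ℕ} (i : Fin d) (l : List (Fin d)) (T : Finset (Fin l.length)) :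
    subL (i :: l) (T.map (Fin.succEmb _)) = subL l T := by
  rw [subL, ← (Fin.strictMono_succ.strictMonoOn _ :
    StrictMonoOn (Fin.succEmb _) _).map_finsetSort, List.map_map]
  rfl

theorem subL_cons_insert_zero {d : ℕ} (i : Fin d) (l : List (Fin d)) (T : Finset (Fin l.length)) :
    subL (i :: l) (insert 0 (T.map (Fin.succEmb _))) = i :: subL l T := by
  rw [subL, sort_insert _ (fun _ _ => Fin.zero_le _) (by simp [Fin.succ_ne_zero]),
    List.map_cons, ← subL, subL_cons_map_succEmb]
  rfl

theorem subL_empty {d : ℕ} (l : List (Fin d)) : subL l ∅ = [] := by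
  simp [subL]

theorem subL_univ {d : ℕ} (l : List (Fin d)) : subL l univ = l := by
  simp [subL, Fin.sort_univ, List.map_get_finRange]

theorem length_subL {d : ℕ} (l : List (Fin d)) (S : Finset (Fin l.length)) :
    (subL l S).length = S.card := by
  simp [subL]

theorem length_subL_le {d : ℕ} (l : List (Fin d)) (S : Finset (Fin l.length)) :
    (subL l S).length ≤ l.length := by
  simpa [length_subL] using card_le_univ S

theorem subL_ne_nil {d : ℕ} {l : List (Fin d)} {S : Finset (Fin l.length)} (hS : S ≠ ∅) :
    subL l S ≠ [] := by
  simpa [← List.length_pos_iff, length_subL, card_pos, nonempty_iff_ne_empty] using hS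

theorem sum_filter_ne_empty_subL_cons {M : Type*} [AddCommMonoid M] {d : ℕ} (i : Fin d)
    (l : List (Fin d)) (g : List (Fin d) → List (Fin d) → M) :
    ∑ S ∈ univ.filter (· ≠ ∅), g (subL (i :: l) S) (subL (i :: l) Sᶜ) =
      ∑ T ∈ univ.filter (· ≠ ∅), g (subL l T) (i :: subL l Tᶜ) +
        ∑ T, g (i :: subL l T) (subL l Tᶜ) := by
  rw [sum_filter, sum_filter]
  erw [sum_univ_finset_fin_succ]
  rw [sum_add_distrib]
  congr 1
  · refine sum_congr rfl fun T _ => ?_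
    erw [compl_map_succEmb, subL_cons_map_succEmb, subL_cons_insert_zero]
    simp
  · refine sum_congr rfl fun T _ => ?_
    erw [compl_insert_zero_map_succEmb, subL_cons_map_succEmb, subL_cons_insert_zero]
    simp

section QuasiShuffle

variable {A : Type}

theorem appLetter_wordE (a : A) (w : List A) : appLetter a (wordE w) = wordE (w ++ [a]) := by
  simp [appLetter, wordE]

theorem appGen_single_one (a : A) (y : TA A) : appGen (single a 1) y = appLetter a y := by
  simp [appGen]

theorem appGen_eq_sum_apply (c : A →₀ ℝ) (y : TA A) :
    appGen c y = (c.sum fun a r => r • appLetter a) y := by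
  simp [appGen, Finsupp.sum]

variable {br : A → A → (A →₀ ℝ)} {M : TA A →ₗ[ℝ] TA A →ₗ[ℝ] TA A}

theorem IsQuasiShuffle.letter_mul_appLetter (hM : IsQuasiShuffle br M) (a b : A) (y : TA A) :
    M (wordE [a]) (appLetter b y) =
      appLetter a (appLetter b y) + appLetter b (M (wordE [a]) y) + appGen (br a b) y := by
  induction y using Finsupp.induction_linear with
  | zero => simp [appGen_eq_sum_apply]
  | add y z hy hz =>
    simp only [map_add, hy, hz, appGen_eq_sum_apply]
    abel
  | single w r =>
    have h := hM.2.2 [] w a b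
    simp only [List.nil_append, hM.1] at h
    have hw : single w r = r • wordE w := by simp [wordE]
    rw [hw, map_smul, map_smul, appLetter_wordE, h, ← appLetter_wordE]
    simp only [map_smul, smul_add, appGen_eq_sum_apply]

end QuasiShuffle

section LetterProduct

variable {A : Type} {d : ℕ}

def letterProd (M : TA A →ₗ[ℝ] TA A →ₗ[ℝ] TA A) (c : List (Fin d) → A) : List (Fin d) → TA A
  | [] => wordE []
  | i :: l => M (wordE [c [i]]) (letterProd M c l)

variable {br : A → A → (A →₀ ℝ)} {M : TA A →ₗ[ℝ] TA A →ₗ[ℝ] TA A}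

theorem letterProd_eq_sum (hM : IsQuasiShuffle br M) (c : List (Fin d) → A) (N : ℕ)
    (hc : ∀ i t, t ≠ [] → t.length < N → br (c [i]) (c t) = single (c (i :: t)) 1)
    {l : List (Fin d)} (hl : l ≠ []) (hlen : l.length ≤ N) :
    letterProd M c l =
      ∑ S ∈ univ.filter (· ≠ ∅), appLetter (c (subL l S)) (letterProd M c (subL l Sᶜ)) := by
  induction l with
  | nil => exact absurd rfl hl
  | cons i l ih =>
    rw [sum_filter_ne_empty_subL_cons i l (fun s t => appLetter (c s) (letterProd M c t))]
    rcases eq_or_ne l [] with rfl | hl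
    · have h0 : univ.filter (fun T : Finset (Fin ([] : List (Fin d)).length) => T ≠ ∅) = ∅ :=
        filter_false_of_mem fun T _ h => h (eq_empty_of_forall_notMem fun k => k.elim0)
      rw [← Finset.add_sum_erase _ _ (mem_univ ∅), ← filter_ne', h0, sum_empty, sum_empty,
        subL_empty, compl_empty, subL_univ]
      simp [letterProd, hM.2.1, appLetter_wordE]
    have hlen : l.length < N := by simpa using hlen
    have hT : ∀ T ∈ univ.filter (· ≠ ∅), M (wordE [c [i]])
        (appLetter (c (subL l T)) (letterProd M c (subL l Tᶜ))) =
          appLetter (c [i]) (appLetter (c (subL l T)) (letterProd M c (subL l Tᶜ))) +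
          appLetter (c (subL l T)) (letterProd M c (i :: subL l Tᶜ)) +
          appLetter (c (i :: subL l T)) (letterProd M c (subL l Tᶜ)) := by
      intro T hT
      rw [hM.letter_mul_appLetter, hc i _ (subL_ne_nil (mem_filter.1 hT).2)
        ((length_subL_le l T).trans_lt hlen), appGen_single_one]
      rfl
    rw [letterProd, ih hl hlen.le, map_sum, sum_congr rfl hT, sum_add_distrib, sum_add_distrib,
      ← map_sum, ← ih hl hlen.le, ← Finset.add_sum_erase _ _ (mem_univ ∅), ← filter_ne',
      subL_empty, compl_empty, subL_univ]
    abel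

end LetterProduct

section MultiIndex

variable {d Nγ : ℕ}

theorem sum_count_eq_length (t : List (Fin d)) : ∑ j, t.count j = t.length := by
  simpa using Multiset.sum_count_eq_card (s := univ) (m := (t : Multiset (Fin d))) (by simp)

/-- The multi-index `∑ₖ e_{tₖ}` of the tuple `t`; outside `0 < |t| ≤ Nγ` it is the junk value
`e₀`. -/
def multiIndex (e₀ : AIdx d Nγ) (t : List (Fin d)) : AIdx d Nγ :=
  if h : 0 < t.length ∧ t.length ≤ Nγ then
    ⟨fun j => t.count j, by rwa [sum_count_eq_length]⟩
  else e₀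

theorem multiIndex_val (e₀ : AIdx d Nγ) {t : List (Fin d)} (ht : t ≠ []) (hN : t.length ≤ Nγ)
    (j : Fin d) : (multiIndex e₀ t).val j = t.count j := by
  rw [multiIndex, dif_pos ⟨List.length_pos_iff.2 ht, hN⟩]

theorem multiIndex_eq (e₀ : AIdx d Nγ) {t : List (Fin d)} (ht : t ≠ []) (hN : t.length ≤ Nγ)
    {e : AIdx d Nγ} (he : ∀ j, e.val j = t.count j) : multiIndex e₀ t = e :=
  Subtype.ext (funext fun j => (multiIndex_val e₀ ht hN j).trans (he j).symm)

theorem brIdx_multiIndex (e₀ : AIdx d Nγ) (i : Fin d) {t : List (Fin d)} (ht : t ≠ [])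
    (hN : t.length < Nγ) :
    brIdx d Nγ (multiIndex e₀ [i]) (multiIndex e₀ t) = single (multiIndex e₀ (i :: t)) 1 := by
  have hN' : (i :: t).length ≤ Nγ := hN
  have hi := multiIndex_val e₀ (List.cons_ne_nil i []) ((Nat.le_add_left 1 _).trans hN')
  have hsum : ∑ j, ((multiIndex e₀ [i]).val j + (multiIndex e₀ t).val j) ≤ Nγ := by
    simpa [hi, multiIndex_val e₀ ht hN.le, sum_add_distrib, sum_count_eq_length, add_comm]
      using hN'
  rw [brIdx, dif_pos hsum]
  congr 1
  refine (multiIndex_eq e₀ (List.cons_ne_nil i t) hN' fun j => ?_).symm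
  simp only [hi, multiIndex_val e₀ ht hN.le, List.count_cons, List.count_nil]
  omega

end MultiIndex

section Arborification

variable {A : Type} {d Nγ : ℕ}

theorem fE_mul (f g : FreeMonoid (RT A)) : fE (f * g) = fE f * fE g := by
  simp [fE, MonoidAlgebra.single_mul_single]

theorem dotPC_eq_fE (t : List (Fin d)) :
    dotPC t = fE (FreeMonoid.ofList (t.map fun i => RT.node [i] [])) := by
  induction t with
  | nil => rfl
  | cons i t ih =>
    rw [dotPC, List.map_cons, List.prod_cons, ← dotPC, ih, List.map_cons, ← fE_mul]
    rfl

variable (M' : TA (AIdx d Nγ) →ₗ[ℝ] TA (AIdx d Nγ) →ₗ[ℝ] TA (AIdx d Nγ))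
  (ψS : HBCK (List (Fin d)) →ₗ[ℝ] TA (AIdx d Nγ))

theorem psiS_dotPC (hψ1 : ψS (1 : HBCK (List (Fin d))) = wordE [])
    (hψB : ∀ (t : List (Fin d)) (f : List (RT (List (Fin d)))) (e : AIdx d Nγ),
      (∀ j, e.val j = t.count j) →
      ψS (fE (FreeMonoid.ofList [RT.node t f])) =
        appLetter e (ψS (fE (FreeMonoid.ofList f))))
    (hψm : ∀ f g : FreeMonoid (RT (List (Fin d))),
      ψS (fE (f * g)) = M' (ψS (fE f)) (ψS (fE g)))
    (e₀ : AIdx d Nγ) (hN : 1 ≤ Nγ) (t : List (Fin d)) :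
    ψS (dotPC t) = letterProd M' (multiIndex e₀) t := by
  induction t with
  | nil => exact hψ1
  | cons i t ih =>
    have hleaf : ψS (fE (FreeMonoid.ofList [RT.node [i] []])) = wordE [multiIndex e₀ [i]] := by
      rw [hψB [i] [] _ (multiIndex_val e₀ (List.cons_ne_nil i []) hN)]
      exact congrArg _ hψ1 |>.trans (appLetter_wordE _ _)
    rw [dotPC_eq_fE, List.map_cons, ← List.singleton_append, FreeMonoid.ofList_append, hψm,
      hleaf, ← dotPC_eq_fE, ih]
    rfl

theorem psiS_Bplus_dotPC
    (hψB : ∀ (t : List (Fin d)) (f : List (RT (List (Fin d)))) (e : AIdx d Nγ),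
      (∀ j, e.val j = t.count j) →
      ψS (fE (FreeMonoid.ofList [RT.node t f])) =
        appLetter e (ψS (fE (FreeMonoid.ofList f))))
    (t m : List (Fin d)) {e : AIdx d Nγ} (he : ∀ j, e.val j = t.count j) :
    ψS (Bplus t (dotPC m)) = appLetter e (ψS (dotPC m)) := by
  rw [dotPC_eq_fE, ← hψB t _ e he]
  congr 1
  simp [Bplus, fE, MonoidAlgebra.mapDomainLinearMap_single]

end Arborification

theorem psiS_of_bracket_polynomial_general (d : ℕ)
    (Nγ : ℕ)
    (M' : TA (AIdx d Nγ) →ₗ[ℝ] TA (AIdx d Nγ) →ₗ[ℝ] TA (AIdx d Nγ))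
    (hM' : IsQuasiShuffle (brIdx d Nγ) M')
    (ψS : HBCK (List (Fin d)) →ₗ[ℝ] TA (AIdx d Nγ))
    (hψ1 : ψS (1 : HBCK (List (Fin d))) = wordE [])
    (hψB : ∀ (t : List (Fin d)) (f : List (RT (List (Fin d)))) (e : AIdx d Nγ),
      (∀ j, e.val j = t.count j) →
      ψS (fE (FreeMonoid.ofList [RT.node t f])) =
        appLetter e (ψS (fE (FreeMonoid.ofList f))))
    (hψm : ∀ f g : FreeMonoid (RT (List (Fin d))),
      ψS (fE (f * g)) = M' (ψS (fE f)) (ψS (fE g)))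
    (l : List (Fin d)) (hl : l ≠ []) (hlen : l.length ≤ Nγ)
    (e : AIdx d Nγ) (he : ∀ j, e.val j = l.count j) :
    ψS (bpOfC l) = wordE [e] := by
  have hdot := psiS_dotPC M' ψS hψ1 hψB hψm e ((List.length_pos_iff.2 hl).trans_le hlen)
  have hgraft : ∀ S ∈ univ.filter (fun S : Finset (Fin l.length) => S ≠ ∅ ∧ S ≠ univ),
      ψS (Bplus (subL l S) (dotPC (subL l Sᶜ))) =
        appLetter (multiIndex e (subL l S)) (letterProd M' (multiIndex e) (subL l Sᶜ)) := by
    intro S hS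
    rw [psiS_Bplus_dotPC ψS hψB _ _ (multiIndex_val e (subL_ne_nil (mem_filter.1 hS).2.1)
      ((length_subL_le l S).trans hlen)), hdot]
  have hproper : (univ.filter (fun S : Finset (Fin l.length) => S ≠ ∅)).erase univ =
      univ.filter (fun S => S ≠ ∅ ∧ S ≠ univ) := by
    ext S; simp [and_comm]
  have huniv : univ ∈ univ.filter (fun S : Finset (Fin l.length) => S ≠ ∅) :=
    mem_filter.2 ⟨mem_univ _, (univ_nonempty_iff.2 ⟨⟨0, List.length_pos_iff.2 hl⟩⟩).ne_empty⟩
  rw [bpOfC, map_sub, map_sum, sum_congr rfl hgraft, hdot,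
    letterProd_eq_sum hM' (multiIndex e) Nγ (fun i _ => brIdx_multiIndex e i) hl hlen,
    ← Finset.add_sum_erase _ _ huniv, hproper, add_sub_cancel_right, subL_univ, compl_univ,
    subL_empty, multiIndex_eq e hl hlen he]
  exact appLetter_wordE e []

/-- the symmetrized contracting arborification `ψ_S` maps the
bracket polynomial `⟪i₁⋯iₙ⟫` to the single-letter word on the multi-index
`e_{i₁} + ⋯ + e_{iₙ}`. -/
theorem psiS_of_bracket_polynomial (d : ℕ)
    (γ : ℝ) (hγ0 : 0 < γ) (hγ1 : γ < 1)
    (Nγ : ℕ) (hNγ : Nγ = Nat.floor γ⁻¹)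
    (M' : TA (AIdx d Nγ) →ₗ[ℝ] TA (AIdx d Nγ) →ₗ[ℝ] TA (AIdx d Nγ))
    (hM' : IsQuasiShuffle (brIdx d Nγ) M')
    (ψS : HBCK (List (Fin d)) →ₗ[ℝ] TA (AIdx d Nγ))
    (hψ1 : ψS (1 : HBCK (List (Fin d))) = wordE [])
    (hψB : ∀ (t : List (Fin d)) (f : List (RT (List (Fin d)))) (e : AIdx d Nγ),
      (∀ j, e.val j = t.count j) →
      ψS (fE (FreeMonoid.ofList [RT.node t f])) =
        appLetter e (ψS (fE (FreeMonoid.ofList f))))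
    (hψm : ∀ f g : FreeMonoid (RT (List (Fin d))),
      ψS (fE (f * g)) = M' (ψS (fE f)) (ψS (fE g)))
    (l : List (Fin d)) (hl : l ≠ []) (hlen : l.length ≤ Nγ)
    (e : AIdx d Nγ) (he : ∀ j, e.val j = l.count j) :
    ψS (bpOfC l) = wordE [e] :=
  psiS_of_bracket_polynomial_general d Nγ M' hM' ψS hψ1 hψB hψm l hl hlen e he

end
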